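/- arXiv:1709.01354 — 2 statements merged into one kernel-verified Lean document; each statement's English description precedes it below -/
import Mathlib

section
/- If G is a finite bipartite graph (no odd cycles and no loops; multiple edges allowed), then the nim-value of the graph take-away game on G equals its parity function: ν(G) = φ(G). -/
noncomputable section
open scoped Classical

/-- A finite multigraph with vertices and edge labels drawn from `ℕ`;
loops and multiple edges are allowed.  `ends e` is the unordered pair of
endpoints of the edge labelled `e`. -/
structure MGraph where
  verts : Finset ℕ
  edges : Finset ℕ
  ends : ℕ → Sym2 ℕ

namespace MGraph

/-- Well-formedness: every edge joins vertices of the graph. -/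
def WF (G : MGraph) : Prop := ∀ e ∈ G.edges, ∀ v ∈ G.ends e, v ∈ G.verts

/-- Delete the edge labelled `e`. -/
def delEdge (G : MGraph) (e : ℕ) : MGraph := ⟨G.verts, G.edges.erase e, G.ends⟩

/-- Delete the vertex `v` together with all incident edges. -/
def delVert (G : MGraph) (v : ℕ) : MGraph :=
  ⟨G.verts.erase v, G.edges.filter (fun e => ¬ v ∈ G.ends e), G.ends⟩

def size (G : MGraph) : ℕ := G.verts.card + G.edges.card

/-- Minimal excludant of a finite set of naturals. -/
def mex (s : Finset ℕ) : ℕ := sInf {n : ℕ | n ∉ s}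

/-- Grundy-value computation with fuel; every move strictly decreases `size`,
so fuel `size G` computes the true Sprague–Grundy value of `G`. -/
def nimAux : ℕ → MGraph → ℕ
  | 0, _ => 0
  | fuel + 1, G =>
      mex ((G.verts.image fun v => nimAux fuel (G.delVert v)) ∪
           (G.edges.image fun e => nimAux fuel (G.delEdge e)))

/-- The nim-value (Sprague–Grundy value) of the vertex-and-edge deletion game on
`G` : `ν(∅) = 0` and `ν(G) = mex {ν(H) : H is obtained from G by a single move}`,
where a move deletes one edge, or one vertex with all incident edges. -/
def nim (G : MGraph) : ℕ := nimAux G.size G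

/-- The parity function `φ(G) = (|V| mod 2) + 2 (|E| mod 2)`. -/
def phi (G : MGraph) : ℕ := G.verts.card % 2 + 2 * (G.edges.card % 2)

/-- `u` and `v` are joined by an edge. -/
def Adj (G : MGraph) (u v : ℕ) : Prop := ∃ e ∈ G.edges, G.ends e = s(u, v)

def Reach (G : MGraph) (u v : ℕ) : Prop := Relation.ReflTransGen G.Adj u v

def Connected (G : MGraph) : Prop :=
  G.verts.Nonempty ∧ ∀ u ∈ G.verts, ∀ v ∈ G.verts, G.Reach u v

/-- A (finite) tree: a connected well-formed graph with `|E| + 1 = |V|`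
(this forces the absence of loops, multiple edges and cycles). -/
def IsTree (G : MGraph) : Prop := G.WF ∧ G.Connected ∧ G.edges.card + 1 = G.verts.card

/-- `G` is a cycle graph of length `n ≥ 2`. -/
def IsCycle (G : MGraph) (n : ℕ) : Prop :=
  2 ≤ n ∧ ∃ f g : ℕ → ℕ,
    Set.InjOn f (Set.Iio n) ∧ Set.InjOn g (Set.Iio n) ∧
    G.verts = (Finset.range n).image f ∧
    G.edges = (Finset.range n).image g ∧
    ∀ i < n, G.ends (g i) = s(f i, f ((i + 1) % n))

/-- `G` is a cycle of odd length (hence of length at least 3). -/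
def IsOddCycle (G : MGraph) : Prop := ∃ n, Odd n ∧ G.IsCycle n

/-- Induced subgraph on a set of vertices. -/
def induce (G : MGraph) (S : Finset ℕ) : MGraph :=
  ⟨S, G.edges.filter (fun e => ∀ v ∈ G.ends e, v ∈ S), G.ends⟩

/-- The connected component of `v` in `G`. -/
def component (G : MGraph) (v : ℕ) : MGraph :=
  G.induce (G.verts.filter fun u => G.Reach v u)

/-- Two `MGraph`s are the same graph (same vertices, edges and incidence). -/
def SameGraph (G H : MGraph) : Prop :=
  G.verts = H.verts ∧ G.edges = H.edges ∧ ∀ e ∈ G.edges, G.ends e = H.ends e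

/-- An isomorphism of multigraphs. -/
structure Iso (G H : MGraph) where
  vmap : ℕ → ℕ
  emap : ℕ → ℕ
  vmap_bij : Set.BijOn vmap (G.verts : Set ℕ) (H.verts : Set ℕ)
  emap_bij : Set.BijOn emap (G.edges : Set ℕ) (H.edges : Set ℕ)
  ends_eq : ∀ e ∈ G.edges, H.ends (emap e) = (G.ends e).map vmap

/-- The data witnessing a cancellation at the vertex `s` : `G` is the disjoint
union of a graph `G'` containing `s` and two isomorphic graphs, with vertex
sets `B` and `C`, together with two edges `e₁`, `e₂` joining `s` to
corresponding vertices `v₁ ∈ B`, `v₂ ∈ C`. -/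
def Cancellation (G : MGraph) (s : ℕ) (B C : Finset ℕ) : Prop :=
  ∃ e₁ e₂ v₁ v₂ : ℕ,
    s ∈ G.verts ∧ s ∉ B ∧ s ∉ C ∧ Disjoint B C ∧
    B ⊆ G.verts ∧ C ⊆ G.verts ∧ v₁ ∈ B ∧ v₂ ∈ C ∧
    e₁ ∈ G.edges ∧ e₂ ∈ G.edges ∧ e₁ ≠ e₂ ∧
    G.ends e₁ = s(s, v₁) ∧ G.ends e₂ = s(s, v₂) ∧
    (∀ e ∈ G.edges, e = e₁ ∨ e = e₂ ∨ (∀ v ∈ G.ends e, v ∈ B) ∨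
      (∀ v ∈ G.ends e, v ∈ C) ∨ (∀ v ∈ G.ends e, v ∈ G.verts \ (B ∪ C))) ∧
    ∃ φ : Iso (G.induce B) (G.induce C), φ.vmap v₁ = v₂

def HasCancellationAt (G : MGraph) (s : ℕ) : Prop := ∃ B C, G.Cancellation s B C

/-- A graph is reduced if no cancellation is possible. -/
def Reduced (G : MGraph) : Prop := ∀ s, ¬ G.HasCancellationAt s

/-- Performing one cancellation. -/
def CancelStep (G G' : MGraph) : Prop :=
  ∃ s B C, G.Cancellation s B C ∧ G' = G.induce (G.verts \ (B ∪ C))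

/-- `G` reduces to `H` by a (possibly empty) sequence of cancellations. -/
def ReducesTo (G H : MGraph) : Prop := Relation.ReflTransGen CancelStep G H

/-- `G` consists of the odd cycle `C` attached to the tree `T` at the single
vertex `A`. -/
def CycleWithTreeAt (G C T : MGraph) (A : ℕ) : Prop :=
  C.IsOddCycle ∧ T.IsTree ∧
  C.verts ∩ T.verts = {A} ∧
  Disjoint C.edges T.edges ∧
  G.verts = C.verts ∪ T.verts ∧
  G.edges = C.edges ∪ T.edges ∧
  (∀ e ∈ C.edges, G.ends e = C.ends e) ∧
  (∀ e ∈ T.edges, G.ends e = T.ends e)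

/-- For a graph `G` containing the odd cycle `C` attached to the rest of the
graph at the vertex `A` : the vertex `v` (outside the cycle) is telescoping if,
after deleting `v`, the connected component of `A` reduces by repeatedly
performing cancellations to exactly the cycle `C`. -/
def Telescoping (G C : MGraph) (A v : ℕ) : Prop :=
  v ∈ G.verts ∧ v ∉ C.verts ∧
  ∃ H, ReducesTo ((G.delVert v).component A) H ∧ H.SameGraph C

/-- The degree of the vertex `v`; a loop contributes `2`. -/
def degree (G : MGraph) (v : ℕ) : ℕ :=
  ∑ e ∈ G.edges,
    (if G.ends e = s(v, v) then 2 else if v ∈ G.ends e then 1 else 0)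

def NoLoops (G : MGraph) : Prop := ∀ e ∈ G.edges, ¬ (G.ends e).IsDiag

def IsSubgraph (H G : MGraph) : Prop :=
  H.verts ⊆ G.verts ∧ H.edges ⊆ G.edges ∧ ∀ e ∈ H.edges, H.ends e = G.ends e

/-- `G` contains the odd cycle `C` and no other cycles (of length ≥ 2). -/
def UniqueOddCycle (G C : MGraph) : Prop :=
  C.IsSubgraph G ∧ C.IsOddCycle ∧
  ∀ (C' : MGraph) (n : ℕ), C'.IsSubgraph G → C'.IsCycle n → C'.SameGraph C

/-- `G` is bipartite (two-colourable); in particular it has no loops. -/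
def Bipartite (G : MGraph) : Prop :=
  ∃ c : ℕ → Bool, ∀ e ∈ G.edges, ∀ u v : ℕ, G.ends e = s(u, v) → c u ≠ c v

/-- `G` is a path of length `z` (i.e. with `z` edges) from `P` to `Q`. -/
def IsPath (G : MGraph) (P Q z : ℕ) : Prop :=
  ∃ f g : ℕ → ℕ,
    Set.InjOn f (Set.Iio (z + 1)) ∧ Set.InjOn g (Set.Iio z) ∧
    f 0 = P ∧ f z = Q ∧
    G.verts = (Finset.range (z + 1)).image f ∧
    G.edges = (Finset.range z).image g ∧
    ∀ i < z, G.ends (g i) = s(f i, f (i + 1))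

/-- There is a walk of length `n` from `u` to `v` in `G`. -/
def WalkLen (G : MGraph) (u v n : ℕ) : Prop :=
  ∃ f : ℕ → ℕ, f 0 = u ∧ f n = v ∧ ∀ i < n, G.Adj (f i) (f (i + 1))

/-- Graph distance between two vertices. -/
def edist (G : MGraph) (u v : ℕ) : ℕ := sInf {n | G.WalkLen u v n}

end MGraph

/-!
Deleting an edge flips the edge parity of `φ`; deleting a vertex flips the vertex parity and
changes the edge parity by the vertex's degree. So no move preserves `φ`. In a bipartite graph
each colour class has degree sum `|E|`, hence the whole graph has degree sum `2|E|`: when `|E|`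
is odd there is an edge and a vertex of odd degree, and when `|V|` is odd there is a vertex of
even degree. Deleting these realises every value below `φ(G)`, and induction on the size of the
graph gives `ν = φ`.
-/

namespace MGraph

open Finset

variable {G : MGraph}

lemma mex_eq {s : Finset ℕ} {k : ℕ} (hk : k ∉ s) (hlt : ∀ j < k, j ∈ s) : mex s = k := by
  refine le_antisymm (Nat.sInf_le hk) (not_lt.1 fun h => ?_)
  exact Nat.sInf_mem (s := {n | n ∉ s}) ⟨k, hk⟩ (hlt _ h)

def optionValues (f : MGraph → ℕ) (G : MGraph) : Finset ℕ :=
  G.verts.image (fun v => f (G.delVert v)) ∪ G.edges.image (fun e => f (G.delEdge e))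

lemma optionValues_congr {f g : MGraph → ℕ} (hv : ∀ v ∈ G.verts, f (G.delVert v) = g (G.delVert v))
    (he : ∀ e ∈ G.edges, f (G.delEdge e) = g (G.delEdge e)) :
    G.optionValues f = G.optionValues g := by
  rw [optionValues, optionValues, image_congr hv, image_congr he]

lemma mem_optionValues_of_mem_verts (f : MGraph → ℕ) {v : ℕ} (hv : v ∈ G.verts) :
    f (G.delVert v) ∈ G.optionValues f :=
  mem_union_left _ (mem_image_of_mem _ hv)

lemma mem_optionValues_of_mem_edges (f : MGraph → ℕ) {e : ℕ} (he : e ∈ G.edges) :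
    f (G.delEdge e) ∈ G.optionValues f :=
  mem_union_right _ (mem_image_of_mem _ he)

def incidenceFinset (G : MGraph) (v : ℕ) : Finset ℕ := G.edges.filter (v ∈ G.ends ·)

lemma card_verts_delVert {v : ℕ} (hv : v ∈ G.verts) :
    #(G.delVert v).verts + 1 = #G.verts :=
  card_erase_add_one hv

lemma card_edges_delVert_add_card_incidenceFinset (v : ℕ) :
    #(G.delVert v).edges + #(G.incidenceFinset v) = #G.edges :=
  (add_comm _ _).trans (card_filter_add_card_filter_not _)

lemma card_edges_delEdge {e : ℕ} (he : e ∈ G.edges) :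
    #(G.delEdge e).edges + 1 = #G.edges :=
  card_erase_add_one he

lemma size_delVert_lt {v : ℕ} (hv : v ∈ G.verts) : (G.delVert v).size < G.size := by
  have := card_verts_delVert hv
  have := card_edges_delVert_add_card_incidenceFinset (G := G) v
  unfold size
  omega

lemma size_delEdge_lt {e : ℕ} (he : e ∈ G.edges) : (G.delEdge e).size < G.size := by
  have := card_edges_delEdge he
  have : #(G.delEdge e).verts = #G.verts := rfl
  unfold size
  omega

lemma phi_delVert {v : ℕ} (hv : v ∈ G.verts) :
    (G.delVert v).phi = (#G.verts + 1) % 2 + 2 * ((#G.edges + #(G.incidenceFinset v)) % 2) := by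
  have := card_verts_delVert hv
  have := card_edges_delVert_add_card_incidenceFinset (G := G) v
  unfold phi
  omega

lemma phi_delEdge {e : ℕ} (he : e ∈ G.edges) :
    (G.delEdge e).phi = #G.verts % 2 + 2 * ((#G.edges + 1) % 2) := by
  have := card_edges_delEdge he
  have : #(G.delEdge e).verts = #G.verts := rfl
  unfold phi
  omega

lemma nimAux_succ {fuel : ℕ} (h : G.size ≤ fuel) : nimAux (fuel + 1) G = nimAux fuel G := by
  induction fuel generalizing G with
  | zero =>
    have hV : G.verts = ∅ := card_eq_zero.1 (by unfold size at h; omega)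
    have hE : G.edges = ∅ := card_eq_zero.1 (by unfold size at h; omega)
    show mex (G.optionValues (nimAux 0)) = 0
    simp only [optionValues, hV, hE, image_empty, union_empty]
    exact mex_eq (notMem_empty 0) (by omega)
  | succ fuel ih =>
    refine congrArg mex (optionValues_congr (fun v hv => ?_) (fun e he => ?_))
    · exact ih (by have := size_delVert_lt hv; omega)
    · exact ih (by have := size_delEdge_lt he; omega)

lemma nimAux_eq_nim {fuel : ℕ} (h : G.size ≤ fuel) : nimAux fuel G = G.nim := by
  induction fuel, h using Nat.le_induction with
  | base => rfl
  | succ fuel h ih => rw [nimAux_succ h, ih]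

lemma nim_eq_mex_optionValues (G : MGraph) : G.nim = mex (G.optionValues nim) := by
  rw [← nimAux_eq_nim (Nat.le_succ G.size)]
  refine congrArg mex (optionValues_congr (fun v hv => ?_) (fun e he => ?_))
  · exact nimAux_eq_nim (size_delVert_lt hv).le
  · exact nimAux_eq_nim (size_delEdge_lt he).le

lemma WF.delVert (hG : G.WF) (v : ℕ) : (G.delVert v).WF := fun e he w hw =>
  mem_erase.2 ⟨fun hwv => (mem_filter.1 he).2 (hwv ▸ hw), hG e (mem_filter.1 he).1 w hw⟩

lemma WF.delEdge (hG : G.WF) (e : ℕ) : (G.delEdge e).WF := fun f hf =>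
  hG f (mem_of_mem_erase hf)

lemma Bipartite.delVert (hG : G.Bipartite) (v : ℕ) : (G.delVert v).Bipartite :=
  let ⟨c, hc⟩ := hG
  ⟨c, fun e he => hc e (mem_filter.1 he).1⟩

lemma Bipartite.delEdge (hG : G.Bipartite) (e : ℕ) : (G.delEdge e).Bipartite :=
  let ⟨c, hc⟩ := hG
  ⟨c, fun f hf => hc f (mem_of_mem_erase hf)⟩

section Colouring

variable {c : ℕ → Bool} (hWF : G.WF)
  (hc : ∀ e ∈ G.edges, ∀ u v : ℕ, G.ends e = s(u, v) → c u ≠ c v)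
include hWF hc

lemma card_filter_mem_ends_eq_one (b : Bool) {e : ℕ} (he : e ∈ G.edges) :
    #((G.verts.filter (c · = b)).filter (· ∈ G.ends e)) = 1 := by
  obtain ⟨u, w, huw⟩ : ∃ u w, G.ends e = s(u, w) :=
    Sym2.ind (f := fun z => ∃ u w, z = s(u, w)) (fun u w => ⟨u, w, rfl⟩) _
  have hcuw := hc e he u w huw
  have hu := hWF e he u (huw ▸ Sym2.mem_mk_left u w)
  have hw := hWF e he w (huw ▸ Sym2.mem_mk_right u w)
  refine card_eq_one.2 ⟨if c u = b then u else w, ?_⟩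
  ext x
  simp only [mem_filter, huw, Sym2.mem_iff, mem_singleton]
  have hwb : c w = b ↔ c u ≠ b := by
    revert hcuw; cases c u <;> cases c w <;> cases b <;> decide
  grind

lemma sum_card_incidenceFinset_colourClass (b : Bool) :
    ∑ v ∈ G.verts.filter (c · = b), #(G.incidenceFinset v) = #G.edges := calc
  _ = ∑ e ∈ G.edges, #((G.verts.filter (c · = b)).filter (· ∈ G.ends e)) :=
    sum_card_bipartiteAbove_eq_sum_card_bipartiteBelow _
  _ = #G.edges :=
    (sum_congr rfl fun _ he => card_filter_mem_ends_eq_one hWF hc b he).trans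
      (card_eq_sum_ones _).symm

lemma sum_card_incidenceFinset : ∑ v ∈ G.verts, #(G.incidenceFinset v) = 2 * #G.edges := by
  rw [← sum_filter_add_sum_filter_not G.verts (c · = true), two_mul]
  simp only [Bool.not_eq_true]
  rw [sum_card_incidenceFinset_colourClass hWF hc, sum_card_incidenceFinset_colourClass hWF hc]

lemma exists_odd_card_incidenceFinset (hE : Odd #G.edges) :
    ∃ v ∈ G.verts, Odd #(G.incidenceFinset v) := by
  rw [← sum_card_incidenceFinset_colourClass hWF hc true, odd_sum_iff_odd_card_odd] at hE
  obtain ⟨v, hv⟩ := card_pos.1 hE.pos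
  simp only [mem_filter] at hv
  exact ⟨v, hv.1.1, hv.2⟩

lemma exists_even_card_incidenceFinset (hV : Odd #G.verts) :
    ∃ v ∈ G.verts, Even #(G.incidenceFinset v) := by
  by_contra! h
  have heven : Even (∑ v ∈ G.verts, #(G.incidenceFinset v)) :=
    (sum_card_incidenceFinset hWF hc).symm ▸ even_two_mul _
  rw [even_sum_iff_even_card_odd,
    filter_true_of_mem fun v hv => Nat.not_even_iff_odd.1 (h v hv)] at heven
  exact Nat.not_even_iff_odd.2 hV heven

end Colouring

lemma phi_notMem_optionValues_phi : G.phi ∉ G.optionValues phi := by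
  simp only [optionValues, mem_union, mem_image, not_or, not_exists, not_and]
  refine ⟨fun v hv h => ?_, fun e he h => ?_⟩
  · rw [phi_delVert hv] at h; unfold phi at h; omega
  · rw [phi_delEdge he] at h; unfold phi at h; omega

lemma mem_optionValues_phi_of_lt_phi (hWF : G.WF) (hBip : G.Bipartite) {j : ℕ}
    (hj : j < G.phi) : j ∈ G.optionValues phi := by
  obtain ⟨c, hc⟩ := hBip
  have hj_cases : (Odd #G.edges ∧ (j = #G.verts % 2 ∨ j = (#G.verts + 1) % 2)) ∨
      (Odd #G.verts ∧ j = 2 * (#G.edges % 2)) := by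
    unfold phi at hj; simp only [Nat.odd_iff]; omega
  rcases hj_cases with ⟨hE, rfl | rfl⟩ | ⟨hV, rfl⟩
  · obtain ⟨e, he⟩ := card_pos.1 hE.pos
    convert mem_optionValues_of_mem_edges phi he using 1
    have := Nat.odd_iff.1 hE
    rw [phi_delEdge he]; omega
  · obtain ⟨v, hv, hodd⟩ := exists_odd_card_incidenceFinset hWF hc hE
    convert mem_optionValues_of_mem_verts phi hv using 1
    have := Nat.odd_iff.1 hE; have := Nat.odd_iff.1 hodd
    rw [phi_delVert hv]; omega
  · obtain ⟨v, hv, heven⟩ := exists_even_card_incidenceFinset hWF hc hV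
    convert mem_optionValues_of_mem_verts phi hv using 1
    have := Nat.odd_iff.1 hV; have := Nat.even_iff.1 heven
    rw [phi_delVert hv]; omega

end MGraph

open MGraph in
/-- If `G` is a finite bipartite graph (no odd cycles, no loops; multiple edges
allowed), then the nim-value of the graph take-away game on `G` equals its
parity function: `ν(G) = φ(G)`. -/
theorem bipartite_nim_eq_phi (G : MGraph) (hWF : G.WF) (hBip : G.Bipartite) :
    G.nim = G.phi := by
  induction hn : G.size using Nat.strong_induction_on generalizing G with
  | _ n ih =>
    subst hn
    rw [nim_eq_mex_optionValues, optionValues_congr (g := phi)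
      (fun v hv => ih _ (size_delVert_lt hv) _ (hWF.delVert v) (hBip.delVert v) rfl)
      (fun e he => ih _ (size_delEdge_lt he) _ (hWF.delEdge e) (hBip.delEdge e) rfl)]
    exact mex_eq phi_notMem_optionValues_phi fun _ => mem_optionValues_phi_of_lt_phi hWF hBip
end
end

section
/- Let T and Y be trees with T ∩ Y = {b} and set D₁ := T ∪ Y; let U and Z be trees with U ∩ Z = {d} and set D₂ := U ∪ Z. Let a be a vertex of T, c a vertex of U, and let ψ : D₁ → D₂ be an isomorphism of trees with ψ(a) = c. If |V(Z)| ≥ |V(Y)|, then at least one of the following holds: ψ(Y) is contained in U with d not in ψ(Y); ψ(Y) is contained in Z with d not in ψ(Y); or ψ(b) = d. -/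
noncomputable section
open scoped Classical

namespace MGraph

/-- `D` is the union of the trees `X` and `Y`, which share exactly the single
vertex `b`. -/
def GluedAt (D X Y : MGraph) (b : ℕ) : Prop :=
  X.IsTree ∧ Y.IsTree ∧ X.verts ∩ Y.verts = {b} ∧
  Disjoint X.edges Y.edges ∧
  D.verts = X.verts ∪ Y.verts ∧ D.edges = X.edges ∪ Y.edges ∧
  (∀ e ∈ X.edges, D.ends e = X.ends e) ∧ (∀ e ∈ Y.edges, D.ends e = Y.ends e)

end MGraph
/-! If `ψ` sends a vertex `y₀ ≠ b` of `Y` to `d`, then no vertex of `T` goes to `d`; since `T` is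
connected and `ψ a = c ∈ U`, the image of `T` lies in `U - d`. Counting vertices,
`|T| + |Y| = |U| + |Z|` with `|T| < |U|`, so `|Y| > |Z|`. Otherwise `ψ(Y)` avoids `d`, and being
connected it stays on the side of `ψ b`. -/

namespace MGraph

variable {D G H X Y : MGraph} {b u v : ℕ}

theorem IsSubgraph.adj (h : X.IsSubgraph D) (hadj : X.Adj u v) : D.Adj u v := by
  obtain ⟨e, he, hends⟩ := hadj
  exact ⟨e, h.2.1 he, (h.2.2 e he) ▸ hends⟩

theorem Iso.adj (ψ : Iso G H) (hadj : G.Adj u v) : H.Adj (ψ.vmap u) (ψ.vmap v) := by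
  obtain ⟨e, he, hends⟩ := hadj
  exact ⟨ψ.emap e, ψ.emap_bij.mapsTo he, by rw [ψ.ends_eq e he, hends, Sym2.map_mk]⟩

theorem Iso.card_verts (ψ : Iso G H) : G.verts.card = H.verts.card :=
  Finset.card_nbij ψ.vmap (fun _ hx => ψ.vmap_bij.mapsTo hx) ψ.vmap_bij.injOn ψ.vmap_bij.surjOn

namespace GluedAt

theorem symm (h : GluedAt D X Y b) : GluedAt D Y X b := by
  obtain ⟨hX, hY, hXY, hdisj, hV, hE, hXends, hYends⟩ := h
  exact ⟨hY, hX, Finset.inter_comm X.verts Y.verts ▸ hXY, hdisj.symm,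
    Finset.union_comm X.verts Y.verts ▸ hV, Finset.union_comm X.edges Y.edges ▸ hE, hYends, hXends⟩

theorem mem_left (h : GluedAt D X Y b) : b ∈ X.verts :=
  (Finset.mem_inter.1 (h.2.2.1 ▸ Finset.mem_singleton_self b)).1

theorem mem_right (h : GluedAt D X Y b) : b ∈ Y.verts := h.symm.mem_left

theorem isSubgraph_left (h : GluedAt D X Y b) : X.IsSubgraph D := by
  obtain ⟨-, -, -, -, hV, hE, hXends, -⟩ := h
  exact ⟨hV ▸ Finset.subset_union_left, hE ▸ Finset.subset_union_left,
    fun e he => (hXends e he).symm⟩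

theorem card_verts_add_one (h : GluedAt D X Y b) :
    D.verts.card + 1 = X.verts.card + Y.verts.card := by
  rw [h.2.2.2.2.1, ← Finset.card_union_add_card_inter, h.2.2.1, Finset.card_singleton]

theorem mem_left_of_adj (h : GluedAt D X Y b) (hadj : D.Adj u v) (hu : u ∈ X.verts)
    (hub : u ≠ b) : v ∈ X.verts := by
  obtain ⟨hX, hY, hXY, -, -, hE, hXends, hYends⟩ := h
  obtain ⟨e, he, hends⟩ := hadj
  rcases Finset.mem_union.1 (hE ▸ he) with heX | heY
  · exact hX.1 e heX v (by rw [← hXends e heX, hends]; exact Sym2.mem_mk_right u v)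
  · have huY : u ∈ Y.verts :=
      hY.1 e heY u (by rw [← hYends e heY, hends]; exact Sym2.mem_mk_left u v)
    have : u ∈ X.verts ∩ Y.verts := Finset.mem_inter.2 ⟨hu, huY⟩
    exact absurd (Finset.mem_singleton.1 (hXY ▸ this)) hub

end GluedAt

theorem WF.mem_of_adj (hG : G.WF) (hadj : G.Adj u v) : v ∈ G.verts := by
  obtain ⟨e, he, hends⟩ := hadj
  exact hG e he v (hends ▸ Sym2.mem_mk_right u v)

theorem Iso.mapsTo_left_of_connected {D₁ D₂ U Z : MGraph} {d : ℕ} (ψ : Iso D₁ D₂)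
    (h₂ : GluedAt D₂ U Z d) (hX : X.IsSubgraph D₁) (hXwf : X.WF) (hXconn : X.Connected)
    (hne : ∀ x ∈ X.verts, ψ.vmap x ≠ d) (hu : u ∈ X.verts) (huU : ψ.vmap u ∈ U.verts) :
    ∀ v ∈ X.verts, ψ.vmap v ∈ U.verts := by
  have reach : ∀ v, X.Reach u v → v ∈ X.verts ∧ ψ.vmap v ∈ U.verts := by
    intro v hr
    induction hr with
    | refl => exact ⟨hu, huU⟩
    | @tail w x _ hwx ih =>
      exact ⟨hXwf.mem_of_adj hwx,
        h₂.mem_left_of_adj (ψ.adj (hX.adj hwx)) ih.2 (hne w ih.1)⟩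
  exact fun v hv => (reach v (hXconn.2 u hu v hv)).2

end MGraph

open MGraph in
/-- Let `T`, `Y` be trees with `T ∩ Y = {b}`, `D₁ = T ∪ Y`; let `U`, `Z` be
trees with `U ∩ Z = {d}`, `D₂ = U ∪ Z`; let `a ∈ T`, `c ∈ U` and let
`ψ : D₁(a) → D₂(c)` be an isomorphism of rooted trees.  If `|V(Z)| ≥ |V(Y)|`
then `ψ(Y) ⊆ U − d`, `ψ(Y) ⊆ Z − d`, or `ψ(b) = d`. -/
theorem three_possibilities (T Y U Z D₁ D₂ : MGraph) (a b c d : ℕ)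
    (h₁ : GluedAt D₁ T Y b) (h₂ : GluedAt D₂ U Z d)
    (ha : a ∈ T.verts) (hc : c ∈ U.verts)
    (ψ : Iso D₁ D₂) (hψ : ψ.vmap a = c)
    (hcard : Y.verts.card ≤ Z.verts.card) :
    (∀ y ∈ Y.verts, ψ.vmap y ∈ U.verts ∧ ψ.vmap y ≠ d) ∨
    (∀ y ∈ Y.verts, ψ.vmap y ∈ Z.verts ∧ ψ.vmap y ≠ d) ∨
    ψ.vmap b = d := by
  obtain ⟨⟨hTwf, hTconn, -⟩, ⟨hYwf, hYconn, -⟩, hTY, -⟩ := id h₁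
  have hT := h₁.isSubgraph_left
  have hY := h₁.symm.isSubgraph_left
  by_cases hYd : ∀ y ∈ Y.verts, ψ.vmap y ≠ d
  · have hψb : ψ.vmap b ∈ U.verts ∪ Z.verts :=
      h₂.2.2.2.2.1 ▸ ψ.vmap_bij.mapsTo (hT.1 h₁.mem_left)
    rcases Finset.mem_union.1 hψb with hbU | hbZ
    · exact Or.inl fun y hy => ⟨ψ.mapsTo_left_of_connected h₂ hY hYwf hYconn hYd
        h₁.mem_right hbU y hy, hYd y hy⟩
    · exact Or.inr <| Or.inl fun y hy => ⟨ψ.mapsTo_left_of_connected h₂.symm hY hYwf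
        hYconn hYd h₁.mem_right hbZ y hy, hYd y hy⟩
  push Not at hYd
  obtain ⟨y₀, hy₀, hy₀d⟩ := hYd
  refine Or.inr <| Or.inr <| by_contra fun hb => ?_
  have hψinj : Set.InjOn ψ.vmap T.verts := ψ.vmap_bij.injOn.mono (Finset.coe_subset.2 hT.1)
  have hTd : ∀ t ∈ T.verts, ψ.vmap t ≠ d := by
    intro t ht htd
    have hty₀ : t = y₀ := ψ.vmap_bij.injOn (hT.1 ht) (hY.1 hy₀) (htd.trans hy₀d.symm)
    have htb : t = b := Finset.mem_singleton.1 (hTY ▸ Finset.mem_inter.2 ⟨ht, hty₀ ▸ hy₀⟩)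
    exact hb (htb ▸ htd)
  have hTU := ψ.mapsTo_left_of_connected h₂ hT hTwf hTconn hTd ha (hψ ▸ hc)
  have hTlt : T.verts.card < U.verts.card :=
    calc T.verts.card ≤ (U.verts.erase d).card :=
          Finset.card_le_card_of_injOn ψ.vmap
            (fun t ht => Finset.mem_erase.2 ⟨hTd t ht, hTU t ht⟩) hψinj
      _ < U.verts.card := Finset.card_erase_lt_of_mem h₂.mem_left
  have := h₁.card_verts_add_one
  have := h₂.card_verts_add_one
  have := ψ.card_verts
  omega
end
end
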